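/- In the iterative proportional fitting procedure for an AMP chain graph, the normalization constant is preserved: if Z_U^t(pa) = 1 for all parent configurations pa, and the factor for one complete set Q ∈ Cs(G_U) is updated by ψ_U^{t+1}(Q, Pa_G(Q)) = ψ_U^t(Q, Pa_G(Q)) · p_e(Q | Pa_G(Q)) / p^t(Q | Pa_G(Q)) while all other factors are unchanged, then Z_U^{t+1}(pa) = 1 for all pa, where Z_U^t(pa) = Σ_u Π_{K ∈ Cs(G_U)} ψ_U^t(k, pa_G(K)). -/
import Mathlib


open scoped Classical

/-- The marginal of a distribution `p` on the coordinates in `S`, evaluated at the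
configuration `x` (i.e. the probability that the coordinates in `S` take the values
they take in `x`). -/
noncomputable def marginal {V : Type*} [Fintype V] {X : V → Type*} [∀ v, Fintype (X v)]
    (p : (∀ v, X v) → ℝ) (S : Finset V) (x : ∀ v, X v) : ℝ :=
  ∑ y : ∀ v, X v, if ∀ v ∈ S, y v = x v then p y else 0

/-- Conditional independence `A ⊥_p B | S` of the sets of coordinates `A` and `B`
given `S`, expressed multiplicatively via marginals:
`p(a,b,s)·p(s) = p(a,s)·p(b,s)`. -/
def CondIndep {V : Type*} [Fintype V] {X : V → Type*} [∀ v, Fintype (X v)]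
    (p : (∀ v, X v) → ℝ) (A B S : Finset V) : Prop :=
  ∀ x : ∀ v, X v,
    marginal p (A ∪ B ∪ S) x * marginal p S x
      = marginal p (A ∪ S) x * marginal p (B ∪ S) x

/-- The sum of `f` over all configurations of the coordinates in `S`, the remaining
coordinates being fixed as in `x`. -/
noncomputable def sumOver {V : Type*} [Fintype V] {X : V → Type*}
    [∀ v, Fintype (X v)] (f : (∀ v, X v) → ℝ) (S : Finset V) (x : ∀ v, X v) : ℝ :=
  ∑ y : ∀ v, X v, if ∀ v, v ∉ S → y v = x v then f y else 0

lemma swap_unique {ι : Type*} (t : Finset ι) (P S : ι → Prop) (R : ι → ι → Prop)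
    [DecidablePred P] [DecidablePred S] [∀ z, DecidablePred (R z)]
    (f : ι → ℝ)
    (h1 : ∀ y, S y → ∃! z, P z ∧ R z y)
    (h1' : ∀ y, S y → ∀ z, P z ∧ R z y → z ∈ t)
    (h2 : ∀ z y, P z → R z y → S y) :
    (∑ z ∈ t, if P z then (∑ y ∈ t, if R z y then f y else 0) else 0)
      = ∑ y ∈ t, if S y then f y else 0 := by
  classical
  have key : ∀ z, (if P z then (∑ y ∈ t, if R z y then f y else 0) else 0)
      = ∑ y ∈ t, if P z ∧ R z y then f y else 0 := by
    intro z; split_ifs with h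
    · exact Finset.sum_congr rfl fun y _ => by simp [h]
    · exact (Finset.sum_eq_zero fun y _ => if_neg (fun hc => h hc.1)).symm
  calc (∑ z ∈ t, if P z then (∑ y ∈ t, if R z y then f y else 0) else 0)
      = ∑ z ∈ t, ∑ y ∈ t, if P z ∧ R z y then f y else 0 :=
        Finset.sum_congr rfl fun z _ => key z
    _ = ∑ y ∈ t, ∑ z ∈ t, if P z ∧ R z y then f y else 0 := Finset.sum_comm
    _ = ∑ y ∈ t, if S y then f y else 0 := by
        refine Finset.sum_congr rfl fun y _ => ?_
        by_cases hS : S y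
        · obtain ⟨z0, hz0, huniq⟩ := h1 y hS
          rw [Finset.sum_eq_single_of_mem z0 (h1' y hS z0 hz0)]
          · simp [hz0, hS]
          · intro b _ hb
            rw [if_neg]; intro hb'; exact hb (huniq b hb')
        · rw [if_neg hS]
          refine Finset.sum_eq_zero fun z _ => ?_
          rw [if_neg]; rintro ⟨hp, hr⟩; exact hS (h2 z y hp hr)

lemma sumOver_split {V : Type*} [Fintype V] {X : V → Type*}
    [∀ v, Fintype (X v)] (f : (∀ v, X v) → ℝ) {Q U D : Finset V} (hQU : Q ⊆ U)
    (hD : ∀ v, v ∈ D ↔ v ∈ U ∧ v ∉ Q)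
    (x : ∀ v, X v) :
    sumOver (fun z => sumOver f D z) Q x = sumOver f U x := by
  have h1 : ∀ y : ∀ v, X v, (∀ v, v ∉ U → y v = x v) →
      ∃! z : ∀ v, X v, (∀ v, v ∉ Q → z v = x v) ∧ (∀ v, v ∉ D → y v = z v) := by
    intro y hy
    refine ⟨fun v => if v ∈ Q then y v else x v, ⟨?_, ?_⟩, ?_⟩
    · intro v hv; simp [hv]
    · intro v hv
      by_cases hvQ : v ∈ Q
      · simp [hvQ]
      · have hvU : v ∉ U := fun h => hv ((hD v).2 ⟨h, hvQ⟩)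
        simp [hvQ, hy v hvU]
    · rintro z ⟨hP, hR⟩
      funext v
      by_cases hvQ : v ∈ Q
      · have hv : v ∉ D := fun h => ((hD v).1 h).2 hvQ
        simp [hvQ, (hR v hv).symm]
      · simp [hvQ, hP v hvQ]
  have h2 : ∀ z y : ∀ v, X v, (∀ v, v ∉ Q → z v = x v) →
      (∀ v, v ∉ D → y v = z v) → (∀ v, v ∉ U → y v = x v) := by
    intro z y hP hR v hv
    have hvQ : v ∉ Q := fun h => hv (hQU h)
    have hv2 : v ∉ D := fun h => hv ((hD v).1 h).1
    rw [hR v hv2, hP v hvQ]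
  simp only [sumOver]
  exact swap_unique _ (fun z => ∀ v, v ∉ Q → z v = x v)
    (fun y => ∀ v, v ∉ U → y v = x v)
    (fun z y => ∀ v, v ∉ D → y v = z v) f h1
    (fun y _ z _ => Finset.mem_univ z) h2

lemma marginal_collapse {V : Type*} [Fintype V] {X : V → Type*}
    [∀ v, Fintype (X v)] (p : (∀ v, X v) → ℝ) {Q P W : Finset V}
    (hdisj : ∀ v ∈ P, v ∉ Q) (hW : ∀ v, v ∈ W ↔ v ∈ Q ∨ v ∈ P) (x : ∀ v, X v) :
    sumOver (fun z => marginal p W z) Q x = marginal p P x := by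
  have h1 : ∀ w : ∀ v, X v, (∀ v ∈ P, w v = x v) →
      ∃! z : ∀ v, X v, (∀ v, v ∉ Q → z v = x v) ∧ (∀ v ∈ W, w v = z v) := by
    intro w hw
    refine ⟨fun v => if v ∈ Q then w v else x v, ⟨?_, ?_⟩, ?_⟩
    · intro v hv; simp [hv]
    · intro v hv
      rcases (hW v).1 hv with h | h
      · simp [h]
      · have hvQ : v ∉ Q := hdisj v h
        simp [hvQ, hw v h]
    · rintro z ⟨hP, hR⟩
      funext v
      by_cases hvQ : v ∈ Q
      · simp [hvQ, (hR v ((hW v).2 (Or.inl hvQ))).symm]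
      · simp [hvQ, hP v hvQ]
  have h2 : ∀ z w : ∀ v, X v, (∀ v, v ∉ Q → z v = x v) →
      (∀ v ∈ W, w v = z v) → (∀ v ∈ P, w v = x v) := by
    intro z w hP hR v hv
    have hvQ : v ∉ Q := hdisj v hv
    rw [hR v ((hW v).2 (Or.inr hv)), hP v hvQ]
  simp only [sumOver, marginal]
  exact swap_unique _ (fun z => ∀ v, v ∉ Q → z v = x v)
    (fun w => ∀ v ∈ P, w v = x v)
    (fun z w => ∀ v ∈ W, w v = z v) p h1
    (fun y _ z _ => Finset.mem_univ z) h2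

lemma marginal_pos {V : Type*} [Fintype V] {X : V → Type*} [∀ v, Fintype (X v)]
    {p : (∀ v, X v) → ℝ} (hp : ∀ x, 0 < p x) (S : Finset V) (x : ∀ v, X v) :
    0 < marginal p S x := by
  classical
  unfold marginal
  refine Finset.sum_pos' (fun y _ => ?_) ⟨x, Finset.mem_univ x, ?_⟩
  · split_ifs; exacts [(hp y).le, le_rfl]
  · simp [(hp x)]

lemma marginal_dep {V : Type*} [Fintype V] {X : V → Type*} [∀ v, Fintype (X v)]
    (p : (∀ v, X v) → ℝ) (S : Finset V) {x y : ∀ v, X v}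
    (h : ∀ v ∈ S, x v = y v) : marginal p S x = marginal p S y := by
  unfold marginal
  refine Finset.sum_congr rfl fun w _ => ?_
  congr 1
  simp only [eq_iff_iff]
  constructor <;> intro hh v hv
  · rw [hh v hv, h v hv]
  · rw [hh v hv, ← h v hv]

lemma sumOver_mul_left {V : Type*} [Fintype V] {X : V → Type*} [∀ v, Fintype (X v)]
    {c f : (∀ v, X v) → ℝ} {S : Finset V} {z : ∀ v, X v} {C : ℝ}
    (hc : ∀ y : ∀ v, X v, (∀ v, v ∉ S → y v = z v) → c y = C) :
    sumOver (fun y => c y * f y) S z = C * sumOver f S z := by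
  simp only [sumOver]
  rw [Finset.mul_sum]
  refine Finset.sum_congr rfl fun y _ => ?_
  show (if _ then c y * f y else 0) = _
  split_ifs with h
  · rw [hc y h]
  · ring

lemma sumOver_pos {V : Type*} [Fintype V] {X : V → Type*} [∀ v, Fintype (X v)]
    {f : (∀ v, X v) → ℝ} (hf : ∀ y, 0 < f y) (S : Finset V) (x : ∀ v, X v) :
    0 < sumOver f S x := by
  unfold sumOver
  refine Finset.sum_pos' (fun y _ => ?_) ⟨x, Finset.mem_univ x, ?_⟩
  · split_ifs; exacts [(hf y).le, le_rfl]
  · rw [if_pos (fun v _ => rfl)]; exact hf x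

lemma sumOver_congr {V : Type*} [Fintype V] {X : V → Type*} [∀ v, Fintype (X v)]
    {f g : (∀ v, X v) → ℝ} {S : Finset V} {x : ∀ v, X v}
    (h : ∀ y : ∀ v, X v, (∀ v, v ∉ S → y v = x v) → f y = g y) :
    sumOver f S x = sumOver g S x := by
  unfold sumOver
  refine Finset.sum_congr rfl fun y _ => ?_
  split_ifs with hy
  · exact h y hy
  · rfl

lemma sumOver_mul_const {V : Type*} [Fintype V] {X : V → Type*} [∀ v, Fintype (X v)]
    (f : (∀ v, X v) → ℝ) (S : Finset V) (x : ∀ v, X v) (C : ℝ) :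
    sumOver (fun y => f y * C) S x = sumOver f S x * C := by
  unfold sumOver
  rw [Finset.sum_mul]
  refine Finset.sum_congr rfl fun y _ => ?_
  split_ifs
  · rfl
  · ring

/-- the IPFP update preserves the normalization constant: for a chain
component `U` with factors `ψ^t` indexed by the complete sets `F = Cs(G_U)` (each
`ψ^t_K` depending only on `K ∪ Pa(K)`), if `Z^t_U(pa) = Σ_u Π_{K∈F} ψ^t_K = 1` for
all `pa`, the current model conditional `p^t(Q | Pa(U))` depends only on
`(Q, Pa(Q))` (property C1* plus decomposition), and the factor of one `Q ∈ F` is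
updated by `ψ^{t+1}_Q = ψ^t_Q · p_e(Q | Pa(Q)) / p^t(Q | Pa(Q))` with all other
factors unchanged, then `Z^{t+1}_U(pa) = 1` for all `pa`. -/
theorem stmt12 {V : Type*} [Fintype V] [DecidableEq V] {X : V → Type*}
    [∀ v, Fintype (X v)]
    (Uset : Finset V) (F : Finset (Finset V)) (Pa : Finset V → Finset V)
    (hKU : ∀ K ∈ F, K ⊆ Uset) (hPaU : ∀ K ∈ F, Disjoint (Pa K) Uset)
    (Q : Finset V) (hQF : Q ∈ F)
    (ψt ψt1 : Finset V → ((∀ v, X v) → ℝ))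
    (hψpos : ∀ K ∈ F, ∀ x, 0 < ψt K x)
    (hψdep : ∀ K ∈ F, ∀ x y : ∀ v, X v,
      (∀ v ∈ K ∪ Pa K, x v = y v) → ψt K x = ψt K y)
    (pe : (∀ v, X v) → ℝ) (hpe : ∀ x, 0 < pe x) (hpesum : ∑ x, pe x = 1)
    -- Z^t ≡ 1
    (hZt : ∀ x, sumOver (fun y => ∏ K ∈ F, ψt K y) Uset x = 1)
    -- p^t(Q | Pa(U)) = p^t(Q | Pa(Q)): the conditional depends only on (Q, Pa(Q))
    (hcond : ∀ x y : ∀ v, X v, (∀ v ∈ Q ∪ Pa Q, x v = y v) →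
      sumOver (fun z => ∏ K ∈ F, ψt K z) (Uset \ Q) x
        = sumOver (fun z => ∏ K ∈ F, ψt K z) (Uset \ Q) y)
    -- update step: only the factor of Q changes,
    (hupd_other : ∀ K ∈ F, K ≠ Q → ψt1 K = ψt K)
    -- and ψ^{t+1}_Q · p^t(Q|Pa(Q)) · p_e(Pa(Q)) = ψ^t_Q · p_e(Q, Pa(Q))
    (hupd_Q : ∀ x, ψt1 Q x * sumOver (fun z => ∏ K ∈ F, ψt K z) (Uset \ Q) x
        * marginal pe (Pa Q) x
      = ψt Q x * marginal pe (Q ∪ Pa Q) x) :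
    ∀ x, sumOver (fun y => ∏ K ∈ F, ψt1 K y) Uset x = 1 := by
  
  intro x
  have hQU : Q ⊆ Uset := hKU Q hQF
  have hD : ∀ v, v ∈ Uset \ Q ↔ v ∈ Uset ∧ v ∉ Q := fun v => Finset.mem_sdiff
  have hprodpos : ∀ y : ∀ v, X v, 0 < ∏ K ∈ F, ψt K y :=
    fun y => Finset.prod_pos fun K hK => hψpos K hK y
  have hDpos : ∀ z : ∀ v, X v,
      0 < sumOver (fun y => ∏ K ∈ F, ψt K y) (Uset \ Q) z :=
    fun z => sumOver_pos hprodpos _ z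
  have hMp : ∀ z : ∀ v, X v, 0 < marginal pe (Pa Q) z :=
    fun z => marginal_pos hpe _ z
  have hψQpos : ∀ z : ∀ v, X v, 0 < ψt Q z := hψpos Q hQF
  -- agreement off `Uset \ Q` implies agreement on `Q ∪ Pa Q`
  have hagree : ∀ y z : ∀ v, X v, (∀ v, v ∉ Uset \ Q → y v = z v) →
      ∀ v ∈ Q ∪ Pa Q, y v = z v := by
    intro y z h v hv
    rcases Finset.mem_union.1 hv with hvQ | hvP
    · exact h v (fun hs => ((hD v).1 hs).2 hvQ)
    · have hvU : v ∉ Uset := Finset.disjoint_left.1 (hPaU Q hQF) hvP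
      exact h v (fun hs => hvU ((hD v).1 hs).1)
  -- ψ^{t+1}_Q depends only on `Q ∪ Pa Q`
  have hψt1dep : ∀ y z : ∀ v, X v, (∀ v ∈ Q ∪ Pa Q, y v = z v) →
      ψt1 Q y = ψt1 Q z := by
    intro y z h
    have hDyz := hcond y z h
    have hMpyz : marginal pe (Pa Q) y = marginal pe (Pa Q) z :=
      marginal_dep pe (Pa Q) (fun v hv => h v (Finset.mem_union_right _ hv))
    have hMqpyz : marginal pe (Q ∪ Pa Q) y = marginal pe (Q ∪ Pa Q) z :=
      marginal_dep pe (Q ∪ Pa Q) h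
    have hψyz : ψt Q y = ψt Q z := hψdep Q hQF y z h
    have h1 := hupd_Q y
    have h2 := hupd_Q z
    rw [hDyz, hMpyz, hψyz, hMqpyz, ← h2] at h1
    exact mul_right_cancel₀ (hDpos z).ne' (mul_right_cancel₀ (hMp z).ne' h1)
  -- the value of E z := sum over Uset \ Q of the product over F.erase Q
  have claimA : ∀ z : ∀ v, X v,
      sumOver (fun y => ∏ K ∈ F, ψt K y) (Uset \ Q) z
        = ψt Q z * sumOver (fun y => ∏ K ∈ F.erase Q, ψt K y) (Uset \ Q) z := by
    intro z
    have hfun : (fun y : ∀ v, X v => ∏ K ∈ F, ψt K y)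
        = fun y => ψt Q y * ∏ K ∈ F.erase Q, ψt K y :=
      funext fun y => (Finset.mul_prod_erase F (fun K => ψt K y) hQF).symm
    rw [hfun]
    exact sumOver_mul_left fun y hy => hψdep Q hQF y z (hagree y z hy)
  have claimB : ∀ z : ∀ v, X v,
      sumOver (fun y => ∏ K ∈ F, ψt1 K y) (Uset \ Q) z
        = ψt1 Q z * sumOver (fun y => ∏ K ∈ F.erase Q, ψt K y) (Uset \ Q) z := by
    intro z
    have hfun : (fun y : ∀ v, X v => ∏ K ∈ F, ψt1 K y)
        = fun y => ψt1 Q y * ∏ K ∈ F.erase Q, ψt K y := by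
      funext y
      rw [← Finset.mul_prod_erase F (fun K => ψt1 K y) hQF]
      congr 1
      exact Finset.prod_congr rfl fun K hK => by
        rw [hupd_other K (Finset.mem_of_mem_erase hK) (Finset.ne_of_mem_erase hK)]
    rw [hfun]
    exact sumOver_mul_left fun y hy => hψt1dep y z (hagree y z hy)
  -- inner sum equals a ratio of marginals
  have claimC : ∀ z : ∀ v, X v,
      sumOver (fun y => ∏ K ∈ F, ψt1 K y) (Uset \ Q) z
        = marginal pe (Q ∪ Pa Q) z * (marginal pe (Pa Q) z)⁻¹ := by
    intro z
    rw [claimB z, eq_mul_inv_iff_mul_eq₀ (hMp z).ne']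
    have h := hupd_Q z
    rw [claimA z] at h
    have h' : ψt Q z * (ψt1 Q z
          * sumOver (fun y => ∏ K ∈ F.erase Q, ψt K y) (Uset \ Q) z
          * marginal pe (Pa Q) z)
        = ψt Q z * marginal pe (Q ∪ Pa Q) z := by linarith [h]
    exact mul_left_cancel₀ (hψQpos z).ne' h'
  rw [← sumOver_split (fun y => ∏ K ∈ F, ψt1 K y) hQU hD x]
  have hfin : (fun z => sumOver (fun y => ∏ K ∈ F, ψt1 K y) (Uset \ Q) z)
      = fun z => marginal pe (Q ∪ Pa Q) z * (marginal pe (Pa Q) z)⁻¹ :=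
    funext claimC
  rw [hfin]
  have hstep : sumOver (fun z => marginal pe (Q ∪ Pa Q) z
        * (marginal pe (Pa Q) z)⁻¹) Q x
      = sumOver (fun z => marginal pe (Q ∪ Pa Q) z
        * (marginal pe (Pa Q) x)⁻¹) Q x := by
    refine sumOver_congr fun z hz => ?_
    congr 2
    refine marginal_dep pe (Pa Q) fun v hv => ?_
    have hvU : v ∉ Uset := Finset.disjoint_left.1 (hPaU Q hQF) hv
    exact hz v fun hvQ => hvU (hQU hvQ)
  rw [hstep, sumOver_mul_const,
    marginal_collapse pe (fun v hv hvQ =>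
      (Finset.disjoint_left.1 (hPaU Q hQF) hv) (hQU hvQ))
      (fun v => Finset.mem_union) x,
    mul_inv_cancel₀ (hMp x).ne']
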